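/- arXiv:2309.15399 — 6 statements merged into one kernel-verified Lean document; each statement's English description precedes it below -/
import Mathlib

section
/- Let ν be an additive measure on N and η a real number with 0 < η < min_{i∈N} ν({i}) (assuming all ν({i}) > 0). Define μ(∅)=0, μ(N)=1, and μ(A)=ν(A)−η for all nonempty proper subsets A ⊂ N. Then μ is a supermodular fuzzy measure, and μ(A) ≤ ν(A) for all A ⊆ N. -/
/-! Write `μ = ν - c` with `c = properPenalty η`, which vanishes on `∅` and `univ` and equals `η`
elsewhere. An additive `ν` is modular, and `c` is submodular: if `A` or `B` is `∅` or `univ` then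
`{A ∪ B, A ∩ B} = {A, B}`, and otherwise `c A + c B = 2η` bounds every value of
`c (A ∪ B) + c (A ∩ B)`. Hence `μ` is supermodular. Nonnegativity and monotonicity of `μ` come
from `η < ν {i} ≤ ν A` for every nonempty `A`. -/

open Finset

namespace Finset

section Additive

variable {α M : Type*} [DecidableEq α] [AddCommMonoid M] {f : Finset α → M}

theorem union_add_inter_of_additive
    (hadd : ∀ A B : Finset α, Disjoint A B → f (A ∪ B) = f A + f B) (A B : Finset α) :
    f (A ∪ B) + f (A ∩ B) = f A + f B := by
  have hunion : f (A ∪ B) = f A + f (B \ A) := by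
    rw [← hadd A (B \ A) disjoint_sdiff, union_sdiff_self_eq_union]
  have hB : f B = f (A ∩ B) + f (B \ A) := by
    rw [inter_comm, add_comm, ← hadd _ _ (disjoint_sdiff_inter B A), sdiff_union_inter]
  rw [hunion, hB, add_right_comm, add_assoc]

theorem monotone_of_additive [PartialOrder M] [IsOrderedAddMonoid M]
    (hadd : ∀ A B : Finset α, Disjoint A B → f (A ∪ B) = f A + f B)
    (hnonneg : ∀ A, 0 ≤ f A) : Monotone f := by
  intro A B hAB
  calc f A ≤ f A + f (B \ A) := le_add_of_nonneg_right (hnonneg _)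
    _ = f B := by rw [← hadd A (B \ A) disjoint_sdiff, union_sdiff_of_subset hAB]

end Additive

end Finset

section ProperPenalty

variable {ι : Type*} [Fintype ι] [DecidableEq ι] {η : ℝ}

def properPenalty (η : ℝ) (S : Finset ι) : ℝ := if S = ∅ ∨ S = univ then 0 else η

@[simp] theorem properPenalty_empty : properPenalty η (∅ : Finset ι) = 0 := by
  simp [properPenalty]

@[simp] theorem properPenalty_univ : properPenalty η (univ : Finset ι) = 0 := by
  simp [properPenalty]

theorem properPenalty_of_ne {S : Finset ι} (h₀ : S ≠ ∅) (h₁ : S ≠ univ) :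
    properPenalty η S = η := by
  simp [properPenalty, h₀, h₁]

theorem properPenalty_nonneg (hη : 0 ≤ η) (S : Finset ι) : 0 ≤ properPenalty η S := by
  unfold properPenalty; split_ifs <;> simp [hη]

theorem properPenalty_le (hη : 0 ≤ η) (S : Finset ι) : properPenalty η S ≤ η := by
  unfold properPenalty; split_ifs <;> simp [hη]

theorem properPenalty_union_add_inter_le (hη : 0 ≤ η) (A B : Finset ι) :
    properPenalty η (A ∪ B) + properPenalty η (A ∩ B) ≤ properPenalty η A + properPenalty η B := by
  by_cases hA : A = ∅ ∨ A = univ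
  · rcases hA with rfl | rfl <;> simp [add_comm, union_eq_left.2 (subset_univ _)]
  by_cases hB : B = ∅ ∨ B = univ
  · rcases hB with rfl | rfl <;> simp [union_eq_right.2 (subset_univ _)]
  rw [not_or] at hA hB
  rw [properPenalty_of_ne hA.1 hA.2, properPenalty_of_ne hB.1 hB.2]
  linarith [properPenalty_le hη (A ∪ B), properPenalty_le hη (A ∩ B)]

variable {ν : Finset ι → ℝ}

theorem sub_properPenalty_nonneg (hν0 : ν ∅ = 0) (hνmono : Monotone ν) (hη : ∀ i, η < ν {i})
    (hη0 : 0 ≤ η) (S : Finset ι) : 0 ≤ ν S - properPenalty η S := by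
  obtain rfl | ⟨i, hi⟩ := S.eq_empty_or_nonempty
  · simp [hν0]
  have : ν {i} ≤ ν S := hνmono (singleton_subset_iff.2 hi)
  linarith [hη i, properPenalty_le hη0 S]

theorem monotone_sub_properPenalty (hν0 : ν ∅ = 0) (hνmono : Monotone ν)
    (hη : ∀ i, η < ν {i}) (hη0 : 0 ≤ η) :
    Monotone fun S => ν S - properPenalty η S := by
  intro A B hAB
  by_cases hA : A = ∅
  · subst hA
    simpa [hν0] using sub_properPenalty_nonneg hν0 hνmono hη hη0 B
  by_cases hB : B = univ
  · subst hB
    simp only [properPenalty_univ, sub_zero]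
    linarith [hνmono (subset_univ A), properPenalty_nonneg hη0 A]
  have hB₀ : B ≠ ∅ := fun h => hA (subset_empty.1 (h ▸ hAB))
  have hA₁ : A ≠ univ := fun h => hB (univ_subset_iff.1 (h ▸ hAB))
  simp only [properPenalty_of_ne hA hA₁, properPenalty_of_ne hB₀ hB]
  linarith [hνmono hAB]

end ProperPenalty

theorem additive_shift_is_supermodular_general
    {ι : Type*} [Fintype ι] [DecidableEq ι]
    (ν μ : Finset ι → ℝ) (η : ℝ)
    (hν0 : ν ∅ = 0) (hν1 : ν Finset.univ = 1)
    (hνrange : ∀ A : Finset ι, 0 ≤ ν A ∧ ν A ≤ 1)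
    (hνadd : ∀ A B : Finset ι, Disjoint A B → ν (A ∪ B) = ν A + ν B)
    (hη0 : 0 < η) (hη1 : ∀ i : ι, η < ν {i})
    (hμ0 : μ ∅ = 0) (hμ1 : μ Finset.univ = 1)
    (hμ : ∀ A : Finset ι, A ≠ ∅ → A ≠ Finset.univ → μ A = ν A - η) :
    (∀ A B : Finset ι, A ⊆ B → μ A ≤ μ B) ∧
    (∀ A : Finset ι, 0 ≤ μ A ∧ μ A ≤ 1) ∧
    (∀ A B : Finset ι, μ (A ∪ B) + μ (A ∩ B) ≥ μ A + μ B) ∧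
    (∀ A : Finset ι, μ A ≤ ν A) := by
  have hνmono : Monotone ν := monotone_of_additive hνadd fun A => (hνrange A).1
  obtain rfl : μ = fun S => ν S - properPenalty η S := by
    funext S
    by_cases h₀ : S = ∅
    · simp [h₀, hμ0, hν0]
    by_cases h₁ : S = univ
    · simp [h₁, hμ1, hν1]
    rw [hμ S h₀ h₁, properPenalty_of_ne h₀ h₁]
  have hμmono := monotone_sub_properPenalty hν0 hνmono hη1 hη0.le
  refine ⟨fun A B => @hμmono A B, fun A => ⟨?_, ?_⟩, fun A B => ?_, fun A => ?_⟩
  · exact sub_properPenalty_nonneg hν0 hνmono hη1 hη0.le A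
  · exact (hμmono (subset_univ A)).trans_eq hμ1
  · linarith [union_add_inter_of_additive hνadd A B, properPenalty_union_add_inter_le hη0.le A B]
  · exact sub_le_self _ (properPenalty_nonneg hη0.le A)

/-- Strategy (S1): subtracting η ∈ (0, min ν({i})) from every nonempty proper
subset's value of an additive measure ν yields a supermodular fuzzy measure μ
with μ(A) ≤ ν(A) for all A. -/
theorem additive_shift_is_supermodular
    {ι : Type*} [Fintype ι] [DecidableEq ι]
    (hcard : 2 ≤ Fintype.card ι)
    (ν μ : Finset ι → ℝ) (η : ℝ)
    (hν0 : ν ∅ = 0) (hν1 : ν Finset.univ = 1)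
    (hνrange : ∀ A : Finset ι, 0 ≤ ν A ∧ ν A ≤ 1)
    (hνadd : ∀ A B : Finset ι, Disjoint A B → ν (A ∪ B) = ν A + ν B)
    (hpos : ∀ i : ι, 0 < ν {i})
    (hη0 : 0 < η) (hη1 : ∀ i : ι, η < ν {i})
    (hμ0 : μ ∅ = 0) (hμ1 : μ Finset.univ = 1)
    (hμ : ∀ A : Finset ι, A ≠ ∅ → A ≠ Finset.univ → μ A = ν A - η) :
    (∀ A B : Finset ι, A ⊆ B → μ A ≤ μ B) ∧
    (∀ A : Finset ι, 0 ≤ μ A ∧ μ A ≤ 1) ∧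
    (∀ A B : Finset ι, μ (A ∪ B) + μ (A ∩ B) ≥ μ A + μ B) ∧
    (∀ A : Finset ι, μ A ≤ ν A) :=
  additive_shift_is_supermodular_general ν μ η hν0 hν1 hνrange hνadd hη0 hη1 hμ0 hμ1 hμ
end

section
/- Every antibuoyant fuzzy measure is supermodular: if Δ_i μ(A ∪ {j}) ≥ Δ_j μ(A) for all A ⊆ N \ {i,j} and all distinct i, j ∈ N, then μ is supermodular. -/
/-!
Antibuoyancy for the pairs `(i, j)` and `(j, i)` adds up to supermodularity on the square
`A, A ∪ {i}, A ∪ {j}, A ∪ {i, j}`. Summing these squares along chains shows that the marginal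
gain of an element, and then of a whole set, increases with the set it is added to; comparing
the gain of `A \ B` at `A ∩ B` and at `B` is supermodularity.
-/

namespace Finset

variable {α : Type*} [DecidableEq α]

def LocallySupermodular (μ : Finset α → ℝ) : Prop :=
  ∀ ⦃i j : α⦄ ⦃A : Finset α⦄, i ≠ j → i ∉ A → j ∉ A →
    μ (insert i A) + μ (insert j A) ≤ μ (insert i (insert j A)) + μ A

theorem locallySupermodular_of_antibuoyant [Fintype α] {μ : Finset α → ℝ}
    (hab : ∀ i j : α, i ≠ j → ∀ A : Finset α, A ⊆ univ \ {i, j} →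
      μ (insert i (insert j A)) - μ (insert j A) ≥ μ (insert j A) - μ A) :
    LocallySupermodular μ := by
  intro i j A hij hi hj
  have hA : ∀ x ∈ A, x ≠ i ∧ x ≠ j := fun x hx =>
    ⟨ne_of_mem_of_not_mem hx hi, ne_of_mem_of_not_mem hx hj⟩
  have hab_ij := hab i j hij A (by simpa [subset_iff] using hA)
  have hab_ji := hab j i hij.symm A (by simpa [subset_iff, and_comm] using hA)
  rw [insert_comm] at hab_ji
  linarith

namespace LocallySupermodular

variable {μ : Finset α → ℝ}

theorem marginal_mono (hμ : LocallySupermodular μ) {A B : Finset α} (hAB : A ⊆ B) {i : α}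
    (hi : i ∉ B) : μ (insert i A) - μ A ≤ μ (insert i B) - μ B := by
  suffices ∀ C : Finset α, i ∉ A ∪ C →
      μ (insert i A) - μ A ≤ μ (insert i (A ∪ C)) - μ (A ∪ C) by
    simpa [union_eq_right.mpr hAB] using this B (by rwa [union_eq_right.mpr hAB])
  intro C
  induction C using Finset.induction_on with
  | empty => simp
  | insert j C _ ih =>
    intro hiC
    rw [union_insert] at hiC ⊢
    have hij : i ≠ j := fun h => hiC (h ▸ mem_insert_self i _)
    have hiAC : i ∉ A ∪ C := fun h => hiC (mem_insert_of_mem h)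
    by_cases hj : j ∈ A ∪ C
    · rw [insert_eq_of_mem hj]
      exact ih hiAC
    · linarith [ih hiAC, hμ hij hiAC hj]

theorem union_marginal_mono (hμ : LocallySupermodular μ) {D B : Finset α} (hDB : D ⊆ B)
    {C : Finset α} (hC : Disjoint C B) : μ (D ∪ C) - μ D ≤ μ (B ∪ C) - μ B := by
  induction C using Finset.induction_on with
  | empty => simp
  | insert j C hjC ih =>
    obtain ⟨hjB, hC⟩ := disjoint_insert_left.mp hC
    rw [union_insert, union_insert]
    have hjBC : j ∉ B ∪ C := by simp [hjB, hjC]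
    linarith [ih hC, hμ.marginal_mono (union_subset_union_left hDB) hjBC]

theorem supermodular (hμ : LocallySupermodular μ) (A B : Finset α) :
    μ A + μ B ≤ μ (A ∪ B) + μ (A ∩ B) := by
  have gain :=
    hμ.union_marginal_mono (inter_subset_right (s₁ := A)) (sdiff_disjoint (s := B) (t := A))
  rw [union_comm (A ∩ B), sdiff_union_inter, union_sdiff_self_eq_union, union_comm] at gain
  linarith

end LocallySupermodular

end Finset

theorem antibuoyant_implies_supermodular_general
    {ι : Type*} [Fintype ι] [DecidableEq ι] (μ : Finset ι → ℝ)
    (hab : ∀ i j : ι, i ≠ j → ∀ A : Finset ι, A ⊆ Finset.univ \ {i, j} →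
      μ (insert i (insert j A)) - μ (insert j A) ≥ μ (insert j A) - μ A) :
    ∀ A B : Finset ι, μ (A ∪ B) + μ (A ∩ B) ≥ μ A + μ B :=
  (Finset.locallySupermodular_of_antibuoyant hab).supermodular

/-- Every antibuoyant fuzzy measure is supermodular. -/
theorem antibuoyant_implies_supermodular
    {ι : Type*} [Fintype ι] [DecidableEq ι] (μ : Finset ι → ℝ)
    (h0 : μ ∅ = 0) (h1 : μ Finset.univ = 1)
    (hrange : ∀ A : Finset ι, 0 ≤ μ A ∧ μ A ≤ 1)
    (hmono : ∀ A B : Finset ι, A ⊆ B → μ A ≤ μ B)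
    (hab : ∀ i j : ι, i ≠ j → ∀ A : Finset ι, A ⊆ Finset.univ \ {i, j} →
      μ (insert i (insert j A)) - μ (insert j A) ≥ μ (insert j A) - μ A) :
    ∀ A B : Finset ι, μ (A ∪ B) + μ (A ∩ B) ≥ μ A + μ B :=
  antibuoyant_implies_supermodular_general μ hab
end

section
/- Let ν be an additive measure on N with |N| = n > 3, let i₀ ∈ N with ν({i₀}) > 0, and let B ⊂ N be a proper subset with |B| > 2 and i₀ ∈ B. For η with 0 < η < ν({i₀}), define μ(A) = ν(A) − η if i₀ ∈ A ⊆ B and A ≠ N, and μ(A) = ν(A) otherwise. Then μ is a superadditive fuzzy measure satisfying μ(A) ≤ ν(A) for all A ⊆ N. -/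
/-!
Write `μ = ν - d`, where `d A = η` if `i₀ ∈ A ⊆ S` and `0` otherwise. Two disjoint sets cannot
both contain `i₀`, so `d` is subadditive on disjoint sets, which turns the additivity of `ν` into
superadditivity of `μ`. Monotonicity survives because a set gaining `i₀` gains at least
`ν {i₀} > η` in `ν` while losing at most `η`.
-/

open Finset

section SetFunction

variable {ι : Type*} [DecidableEq ι] {ν d : Finset ι → ℝ}

theorem additive_sdiff (hadd : ∀ A B, Disjoint A B → ν (A ∪ B) = ν A + ν B)
    {A B : Finset ι} (h : A ⊆ B) : ν (B \ A) = ν B - ν A := by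
  have := hadd A (B \ A) disjoint_sdiff
  rw [union_sdiff_of_subset h] at this
  linarith

theorem monotone_of_additive (hnonneg : ∀ A, 0 ≤ ν A)
    (hadd : ∀ A B, Disjoint A B → ν (A ∪ B) = ν A + ν B) : Monotone ν := fun A B h => by
  linarith [additive_sdiff hadd h, hnonneg (B \ A)]

theorem monotone_sub_of_subadditive (hadd : ∀ A B, Disjoint A B → ν (A ∪ B) = ν A + ν B)
    (hsub : ∀ A B, Disjoint A B → d (A ∪ B) ≤ d A + d B) (hle : ∀ A, d A ≤ ν A) :
    Monotone (ν - d) := fun A B h => by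
  have hB := hsub A (B \ A) disjoint_sdiff
  rw [union_sdiff_of_subset h] at hB
  simp only [Pi.sub_apply]
  linarith [additive_sdiff hadd h, hle (B \ A)]

theorem superadditive_sub_of_subadditive
    (hadd : ∀ A B, Disjoint A B → ν (A ∪ B) = ν A + ν B)
    (hsub : ∀ A B, Disjoint A B → d (A ∪ B) ≤ d A + d B) {A B : Finset ι}
    (hAB : Disjoint A B) : (ν - d) A + (ν - d) B ≤ (ν - d) (A ∪ B) := by
  simp only [Pi.sub_apply]
  linarith [hadd A B hAB, hsub A B hAB]

end SetFunction

section Discount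

variable {ι : Type*} [DecidableEq ι]

def discount (i₀ : ι) (S : Finset ι) (η : ℝ) (A : Finset ι) : ℝ :=
  if i₀ ∈ A ∧ A ⊆ S then η else 0

variable {i₀ : ι} {S : Finset ι} {η : ℝ}

theorem discount_nonneg (hη : 0 ≤ η) (A : Finset ι) : 0 ≤ discount i₀ S η A := by
  unfold discount; split_ifs <;> simp [hη]

theorem discount_le {ν : Finset ι → ℝ} (hnonneg : ∀ A, 0 ≤ ν A) (hmono : Monotone ν)
    (hη : η ≤ ν {i₀}) (A : Finset ι) : discount i₀ S η A ≤ ν A := by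
  unfold discount
  split_ifs with h
  · exact hη.trans (hmono (singleton_subset_iff.mpr h.1))
  · exact hnonneg A

theorem discount_union_le (hη : 0 ≤ η) {A B : Finset ι} (hAB : Disjoint A B) :
    discount i₀ S η (A ∪ B) ≤ discount i₀ S η A + discount i₀ S η B := by
  unfold discount
  have : i₀ ∈ A → i₀ ∉ B := fun h => disjoint_left.mp hAB h
  split_ifs <;> simp_all [union_subset_iff]

end Discount

theorem additive_to_superadditive_general
    {ι : Type*} [DecidableEq ι]
    (ν μ : Finset ι → ℝ) (i₀ : ι) (S : Finset ι) (η : ℝ)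
    (hνrange : ∀ A : Finset ι, 0 ≤ ν A ∧ ν A ≤ 1)
    (hνadd : ∀ A B : Finset ι, Disjoint A B → ν (A ∪ B) = ν A + ν B)
    (hη0 : 0 < η) (hη1 : η < ν {i₀})
    (hμa : ∀ A : Finset ι, i₀ ∈ A → A ⊆ S → μ A = ν A - η)
    (hμb : ∀ A : Finset ι, ¬ (i₀ ∈ A ∧ A ⊆ S) → μ A = ν A) :
    (∀ A B : Finset ι, A ⊆ B → μ A ≤ μ B) ∧
    (∀ A : Finset ι, 0 ≤ μ A ∧ μ A ≤ 1) ∧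
    (∀ A B : Finset ι, Disjoint A B → μ (A ∪ B) ≥ μ A + μ B) ∧
    (∀ A : Finset ι, μ A ≤ ν A) := by
  have hμ : μ = ν - discount i₀ S η := funext fun A => by
    by_cases h : i₀ ∈ A ∧ A ⊆ S
    · simp [discount, h, hμa A h.1 h.2]
    · simp [discount, h, hμb A h]
  subst hμ
  have hnonneg A := (hνrange A).1
  have hd0 := discount_nonneg (i₀ := i₀) (S := S) hη0.le
  have hdν := discount_le hnonneg (monotone_of_additive hnonneg hνadd) hη1.le (S := S)
  have hsub A B (h : Disjoint A B) := discount_union_le (i₀ := i₀) (S := S) hη0.le h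
  refine ⟨fun A B h => monotone_sub_of_subadditive hνadd hsub hdν h,
    fun A => ⟨?_, ?_⟩, fun A B h => superadditive_sub_of_subadditive hνadd hsub h,
    fun A => ?_⟩ <;> simp only [Pi.sub_apply] <;> linarith [hd0 A, hdν A, (hνrange A).2]

/-- Strategy (S3): discounting by η the values of subsets A with i₀ ∈ A ⊆ S
(S a proper subset with |S| > 2 containing i₀) turns an additive measure
into a superadditive fuzzy measure dominated by ν. -/
theorem additive_to_superadditive
    {ι : Type*} [Fintype ι] [DecidableEq ι]
    (hn : 3 < Fintype.card ι)
    (ν μ : Finset ι → ℝ) (i₀ : ι) (S : Finset ι) (η : ℝ)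
    (hν0 : ν ∅ = 0) (hν1 : ν Finset.univ = 1)
    (hνrange : ∀ A : Finset ι, 0 ≤ ν A ∧ ν A ≤ 1)
    (hνadd : ∀ A B : Finset ι, Disjoint A B → ν (A ∪ B) = ν A + ν B)
    (hi₀ : 0 < ν {i₀})
    (hS : S ⊂ Finset.univ) (hScard : 2 < S.card) (hi₀S : i₀ ∈ S)
    (hη0 : 0 < η) (hη1 : η < ν {i₀})
    (hμa : ∀ A : Finset ι, i₀ ∈ A → A ⊆ S → μ A = ν A - η)
    (hμb : ∀ A : Finset ι, ¬ (i₀ ∈ A ∧ A ⊆ S) → μ A = ν A) :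
    (∀ A B : Finset ι, A ⊆ B → μ A ≤ μ B) ∧
    (∀ A : Finset ι, 0 ≤ μ A ∧ μ A ≤ 1) ∧
    (∀ A B : Finset ι, Disjoint A B → μ (A ∪ B) ≥ μ A + μ B) ∧
    (∀ A : Finset ι, μ A ≤ ν A) :=
  additive_to_superadditive_general ν μ i₀ S η hνrange hνadd hη0 hη1 hμa hμb
end

section
/- Let μ be a superadditive fuzzy measure on N, A a nonempty proper subset of N, and set l₇ = max over nonempty B ⊂ A of (μ(B)+μ(A\B)) and l₈ = min over C with A ⊂ C ⊂ N of (μ(C)−μ(C\A)) (with the convention that empty max/min are 0 and 1 respectively). If the value μ(A) is replaced by any value t ∈ [l₇, l₈], the resulting set function is still a superadditive fuzzy measure. -/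
/-!
Changing `μ` only at `A` can break monotonicity or superadditivity only in an inequality
that involves `A` itself. Those inequalities are `μ B + μ (A \ B) ≤ μ A` for a split of `A`
into two nonempty parts (which also gives `μ B ≤ μ A` for `B ⊂ A`, as `μ ≥ 0`) and
`μ A + μ (C \ A) ≤ μ C` for `A ⊂ C` (which also gives `μ A ≤ μ C`); the bounds `l₇ ≤ t ≤ l₈`
say precisely that they still hold with `t` in place of `μ A`.
-/

open Finset Function

theorem Monotone.update {α β : Type*} [PartialOrder α] [Preorder β] [DecidableEq α]
    {f : α → β} (hf : Monotone f) {a : α} {b : β}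
    (hlt : ∀ x < a, f x ≤ b) (hgt : ∀ x, a < x → b ≤ f x) : Monotone (update f a b) := by
  intro x y hxy
  by_cases hx : x = a <;> by_cases hy : y = a
  · simp [hx, hy]
  · subst hx
    simpa [hy] using hgt y (lt_of_le_of_ne hxy (Ne.symm hy))
  · subst hy
    simpa [hx] using hlt x (lt_of_le_of_ne hxy hx)
  · simpa [hx, hy] using hf hxy

section SetFunction

variable {ι : Type*} [DecidableEq ι]

def SuperadditiveSetFunction (μ : Finset ι → ℝ) : Prop :=
  ∀ S T, Disjoint S T → μ S + μ T ≤ μ (S ∪ T)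

variable {μ : Finset ι → ℝ} {A : Finset ι} {t : ℝ}

theorem monotone_update_of_bounds (hmono : Monotone μ) (hnonneg : ∀ S, 0 ≤ μ S)
    (h0 : μ ∅ = 0) (ht : 0 ≤ t)
    (hlow : ∀ B ⊆ A, B ≠ ∅ → B ≠ A → μ B + μ (A \ B) ≤ t)
    (hup : ∀ C, A ⊂ C → t ≤ μ C - μ (C \ A)) : Monotone (update μ A t) := by
  refine hmono.update (fun B hB => ?_) (fun C hC => ?_)
  · rcases eq_or_ne B ∅ with rfl | hB0
    · rwa [h0]
    · linarith [hlow B hB.le hB0 hB.ne, hnonneg (A \ B)]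
  · linarith [hup C hC, hnonneg (C \ A)]

theorem update_self_add_update_le_update_union (h0 : μ ∅ = 0) (hA : A ≠ ∅)
    (hup : ∀ C, A ⊂ C → t ≤ μ C - μ (C \ A)) {T : Finset ι} (hT : Disjoint A T) :
    update μ A t A + update μ A t T ≤ update μ A t (A ∪ T) := by
  rcases eq_or_ne T ∅ with rfl | hT0
  · simp [hA.symm, h0]
  have hTA : ¬T ⊆ A := fun h => hT0 (hT.eq_bot_of_ge h)
  have hAT : A ⊂ A ∪ T := left_lt_sup.2 hTA
  have := hup _ hAT
  rw [union_sdiff_cancel_left hT] at this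
  simp only [update_self, update_of_ne hAT.ne', update_of_ne (fun h => hTA h.le)]
  linarith

theorem SuperadditiveSetFunction.update (hμ : SuperadditiveSetFunction μ) (h0 : μ ∅ = 0)
    (hA : A ≠ ∅) (hlow : ∀ B ⊆ A, B ≠ ∅ → B ≠ A → μ B + μ (A \ B) ≤ t)
    (hup : ∀ C, A ⊂ C → t ≤ μ C - μ (C \ A)) :
    SuperadditiveSetFunction (update μ A t) := by
  intro S T hST
  rcases eq_or_ne S A with rfl | hS
  · exact update_self_add_update_le_update_union h0 hA hup hST
  rcases eq_or_ne T A with rfl | hT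
  · rw [add_comm, union_comm]
    exact update_self_add_update_le_update_union h0 hA hup hST.symm
  rw [update_of_ne hS, update_of_ne hT]
  rcases eq_or_ne (S ∪ T) A with hSTA | hSTA
  · have hS0 : S ≠ ∅ := by rintro rfl; exact hT (by simpa using hSTA)
    have hAS : A \ S = T := by rw [← hSTA, union_sdiff_cancel_left hST]
    rw [hSTA, update_self, ← hAS]
    exact hlow S (hSTA ▸ subset_union_left) hS0 hS
  · rw [update_of_ne hSTA]
    exact hμ S T hST

end SetFunction

theorem superadditive_allowable_range_general
    {ι : Type*} [Fintype ι] [DecidableEq ι] (μ : Finset ι → ℝ)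
    (h0 : μ ∅ = 0)
    (hrange : ∀ A : Finset ι, 0 ≤ μ A ∧ μ A ≤ 1)
    (hmono : ∀ A B : Finset ι, A ⊆ B → μ A ≤ μ B)
    (hsuper : ∀ A B : Finset ι, Disjoint A B → μ (A ∪ B) ≥ μ A + μ B)
    (A : Finset ι) (hA1 : A ≠ ∅) (t : ℝ)
    (hl : (A.powerset.filter (fun B => B ≠ ∅ ∧ B ≠ A)).fold max 0
            (fun B => μ B + μ (A \ B)) ≤ t)
    (hu : t ≤ ((Finset.univ : Finset (Finset ι)).filter (fun C => A ⊂ C)).fold min 1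
            (fun C => μ C - μ (C \ A))) :
    (∀ S T : Finset ι, S ⊆ T → Function.update μ A t S ≤ Function.update μ A t T) ∧
    (∀ S : Finset ι, 0 ≤ Function.update μ A t S ∧ Function.update μ A t S ≤ 1) ∧
    (∀ S T : Finset ι, Disjoint S T →
      Function.update μ A t (S ∪ T) ≥ Function.update μ A t S + Function.update μ A t T) := by
  obtain ⟨ht0, hsplits⟩ := (fold_max_le t).mp hl
  obtain ⟨ht1, hsupersets⟩ := (le_fold_min t).mp hu
  have hlow : ∀ B ⊆ A, B ≠ ∅ → B ≠ A → μ B + μ (A \ B) ≤ t := fun B hB hB0 hBA =>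
    hsplits B (mem_filter.2 ⟨mem_powerset.2 hB, hB0, hBA⟩)
  have hup : ∀ C, A ⊂ C → t ≤ μ C - μ (C \ A) := fun C hC =>
    hsupersets C (mem_filter.2 ⟨mem_univ C, hC⟩)
  exact ⟨monotone_update_of_bounds hmono (fun S => (hrange S).1) h0 ht0 hlow hup,
    (forall_update_iff μ fun _ x => 0 ≤ x ∧ x ≤ 1).2 ⟨⟨ht0, ht1⟩, fun S _ => hrange S⟩,
    SuperadditiveSetFunction.update hsuper h0 hA1 hlow hup⟩

/-- Allowable range for superadditive measures: replacing μ(A) with any value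
t ∈ [l₇, l₈], where l₇ = max_{∅≠B⊂A} (μ(B)+μ(A\B)) and
l₈ = min_{A⊂C} (μ(C)−μ(C\A)) (empty max = 0, empty min = 1),
keeps the set function a superadditive fuzzy measure. -/
theorem superadditive_allowable_range
    {ι : Type*} [Fintype ι] [DecidableEq ι] (μ : Finset ι → ℝ)
    (h0 : μ ∅ = 0) (h1 : μ Finset.univ = 1)
    (hrange : ∀ A : Finset ι, 0 ≤ μ A ∧ μ A ≤ 1)
    (hmono : ∀ A B : Finset ι, A ⊆ B → μ A ≤ μ B)
    (hsuper : ∀ A B : Finset ι, Disjoint A B → μ (A ∪ B) ≥ μ A + μ B)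
    (A : Finset ι) (hA1 : A ≠ ∅) (hA2 : A ≠ Finset.univ) (t : ℝ)
    (hl : (A.powerset.filter (fun B => B ≠ ∅ ∧ B ≠ A)).fold max 0
            (fun B => μ B + μ (A \ B)) ≤ t)
    (hu : t ≤ ((Finset.univ : Finset (Finset ι)).filter (fun C => A ⊂ C)).fold min 1
            (fun C => μ C - μ (C \ A))) :
    (∀ S T : Finset ι, S ⊆ T → Function.update μ A t S ≤ Function.update μ A t T) ∧
    (∀ S : Finset ι, 0 ≤ Function.update μ A t S ∧ Function.update μ A t S ≤ 1) ∧
    (∀ S T : Finset ι, Disjoint S T →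
      Function.update μ A t (S ∪ T) ≥ Function.update μ A t S + Function.update μ A t T) :=
  superadditive_allowable_range_general μ h0 hrange hmono hsuper A hA1 t hl hu
end

section
/- Let ν be a fuzzy measure on N, 1 ≤ k < n, and K ∈ (0,1]. Suppose M = max_{|B|=k} ν(B) > 0. Define μ(A) = K·ν(A)/M for |A| ≤ k, and μ(A) = K + ((|A|−k−1)/(n−k−1))·(1−K) for |A| ≥ k+1 (when n > k+1; for |A| = n set μ(N)=1). Then μ is a fuzzy measure, i.e., it is monotone with μ(∅)=0 and μ(N)=1. -/
/-!
Small sets are rescaled copies of `ν`, so they are monotone with values in `[0, K]`, because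
every set of size at most `k` lies inside a `k`-set and hence has `ν`-value at most `M`.
Large sets get values in `[K, 1]` that grow with cardinality, so no small set can exceed a
large one.
-/

open Finset

namespace KInteractive

noncomputable def tail (n k : ℕ) (K : ℝ) (c : ℕ) : ℝ :=
  K + ((c : ℝ) - k - 1) / ((n : ℝ) - k - 1) * (1 - K)

variable {n k : ℕ} {K : ℝ}

lemma tail_mono (hK : K ≤ 1) (hkn : k + 1 ≤ n) : Monotone (tail n k K) := by
  intro c d hcd
  have hden : (0 : ℝ) ≤ (n : ℝ) - k - 1 := by
    have : (k : ℝ) + 1 ≤ n := by exact_mod_cast hkn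
    linarith
  have hcd' : (c : ℝ) ≤ d := by exact_mod_cast hcd
  unfold tail
  gcongr

lemma le_tail (hK : K ≤ 1) (hkn : k + 1 ≤ n) {c : ℕ} (hc : k + 1 ≤ c) : K ≤ tail n k K c := by
  have h := tail_mono hK hkn hc
  have hbase : tail n k K (k + 1) = K := by simp [tail]
  linarith

lemma tail_le_one (hK : K ≤ 1) {c : ℕ} (hkc : k + 1 ≤ c) (hcn : c ≤ n) : tail n k K c ≤ 1 := by
  have hkn : ((k + 1 : ℕ) : ℝ) ≤ n := by exact_mod_cast hkc.trans hcn
  have hcn' : (c : ℝ) ≤ n := by exact_mod_cast hcn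
  push_cast at hkn
  have hratio : ((c : ℝ) - k - 1) / ((n : ℝ) - k - 1) ≤ 1 :=
    div_le_one_of_le₀ (by linarith) (by linarith)
  unfold tail
  nlinarith

end KInteractive

open KInteractive

lemma le_fold_max_filter_card_eq {ι : Type*} [Fintype ι] {ν : Finset ι → ℝ} (hν : Monotone ν)
    {k : ℕ} (hk : k ≤ Fintype.card ι) {A : Finset ι} (hA : #A ≤ k) :
    ν A ≤ ((univ : Finset (Finset ι)).filter (fun B => #B = k)).fold max 0 ν := by
  classical
  obtain ⟨B, hAB, hB⟩ := exists_superset_card_eq hA hk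
  exact (hν hAB).trans ((le_fold_max _).2 (Or.inr ⟨B, by simpa using hB, le_rfl⟩))

lemma monotone_of_card_threshold {ι : Type*} {μ : Finset ι → ℝ} (k : ℕ) (K : ℝ)
    (hsmall : ∀ A : Finset ι, #A ≤ k → μ A ≤ K) (hlarge : ∀ A : Finset ι, k < #A → K ≤ μ A)
    (hmono_small : ∀ A B : Finset ι, A ⊆ B → #B ≤ k → μ A ≤ μ B)
    (hmono_large : ∀ A B : Finset ι, A ⊆ B → k < #A → μ A ≤ μ B) : Monotone μ := by
  intro A B hAB
  have hcard := card_le_card hAB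
  by_cases hB : #B ≤ k
  · exact hmono_small A B hAB hB
  by_cases hA : #A ≤ k
  · exact (hsmall A hA).trans (hlarge B (by omega))
  · exact hmono_large A B hAB (by omega)

section LargeSets

variable {ι : Type*} [Fintype ι] {μ : Finset ι → ℝ} {k : ℕ} {K : ℝ}

lemma mem_Icc_of_card_gt (hK : K ≤ 1)
    (hμb : ∀ A : Finset ι, k + 1 ≤ #A → #A < Fintype.card ι →
      μ A = tail (Fintype.card ι) k K #A)
    (hμc : μ univ = 1) {A : Finset ι} (hA : k < #A) : K ≤ μ A ∧ μ A ≤ 1 := by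
  rcases (card_le_univ A).lt_or_eq with hlt | heq
  · rw [hμb A hA hlt]
    exact ⟨le_tail hK (hA.trans hlt) hA, tail_le_one hK hA hlt.le⟩
  · rw [eq_univ_of_card A heq, hμc]
    exact ⟨hK, le_rfl⟩

lemma le_of_subset_of_card_gt (hK : K ≤ 1)
    (hμb : ∀ A : Finset ι, k + 1 ≤ #A → #A < Fintype.card ι →
      μ A = tail (Fintype.card ι) k K #A)
    (hμc : μ univ = 1) {A B : Finset ι} (hAB : A ⊆ B) (hA : k < #A) : μ A ≤ μ B := by
  have hcard := card_le_card hAB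
  rcases (card_le_univ B).lt_or_eq with hlt | heq
  · rw [hμb A hA (hcard.trans_lt hlt), hμb B (by omega) hlt]
    exact tail_mono hK (by omega) hcard
  · rw [eq_univ_of_card B heq, hμc]
    exact (mem_Icc_of_card_gt hK hμb hμc hA).2

end LargeSets

theorem k_interactive_construction_general
    {ι : Type*} [Fintype ι]
    (ν μ : Finset ι → ℝ) (k : ℕ) (K : ℝ)
    (hk2 : k < Fintype.card ι)
    (hK0 : 0 < K) (hK1 : K ≤ 1)
    (hν0 : ν ∅ = 0)
    (hνrange : ∀ A : Finset ι, 0 ≤ ν A ∧ ν A ≤ 1)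
    (hνmono : ∀ A B : Finset ι, A ⊆ B → ν A ≤ ν B)
    (M : ℝ)
    (hM : M = ((Finset.univ : Finset (Finset ι)).filter (fun B => B.card = k)).fold max 0 ν)
    (hMpos : 0 < M)
    (hμa : ∀ A : Finset ι, A.card ≤ k → μ A = K * ν A / M)
    (hμb : ∀ A : Finset ι, k + 1 ≤ A.card → A.card < Fintype.card ι →
      μ A = K + ((A.card : ℝ) - k - 1) / ((Fintype.card ι : ℝ) - k - 1) * (1 - K))
    (hμc : μ Finset.univ = 1) :
    (∀ A B : Finset ι, A ⊆ B → μ A ≤ μ B) ∧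
    μ ∅ = 0 ∧ μ Finset.univ = 1 ∧
    (∀ A : Finset ι, 0 ≤ μ A ∧ μ A ≤ 1) := by
  have hν_le_M : ∀ A : Finset ι, #A ≤ k → ν A ≤ M := fun A hA =>
    hM ▸ le_fold_max_filter_card_eq (fun A B => hνmono A B) hk2.le hA
  have hsmall : ∀ A : Finset ι, #A ≤ k → 0 ≤ μ A ∧ μ A ≤ K := fun A hA => by
    rw [hμa A hA, div_le_iff₀ hMpos]
    exact ⟨by have := (hνrange A).1; positivity, by gcongr; exact hν_le_M A hA⟩
  have hlarge : ∀ A : Finset ι, k < #A → K ≤ μ A ∧ μ A ≤ 1 := fun A =>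
    mem_Icc_of_card_gt hK1 hμb hμc
  have hmono : Monotone μ := by
    refine monotone_of_card_threshold k K (fun A hA => (hsmall A hA).2)
      (fun A hA => (hlarge A hA).1) (fun A B hAB hB => ?_)
      (fun A B hAB hA => le_of_subset_of_card_gt hK1 hμb hμc hAB hA)
    rw [hμa A ((card_le_card hAB).trans hB), hμa B hB]
    gcongr
    exact hνmono A B hAB
  refine ⟨fun A B hAB => hmono hAB, by rw [hμa ∅ (by simp), hν0, mul_zero, zero_div], hμc, fun A => ?_⟩
  rcases le_or_gt #A k with hA | hA
  · exact ⟨(hsmall A hA).1, (hsmall A hA).2.trans hK1⟩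
  · exact ⟨hK0.le.trans (hlarge A hA).1, (hlarge A hA).2⟩

/-- The k-interactive construction yields a fuzzy measure. -/
theorem k_interactive_construction
    {ι : Type*} [Fintype ι] [DecidableEq ι]
    (ν μ : Finset ι → ℝ) (k : ℕ) (K : ℝ)
    (hk1 : 1 ≤ k) (hk2 : k < Fintype.card ι)
    (hK0 : 0 < K) (hK1 : K ≤ 1)
    (hν0 : ν ∅ = 0) (hν1 : ν Finset.univ = 1)
    (hνrange : ∀ A : Finset ι, 0 ≤ ν A ∧ ν A ≤ 1)
    (hνmono : ∀ A B : Finset ι, A ⊆ B → ν A ≤ ν B)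
    (M : ℝ)
    (hM : M = ((Finset.univ : Finset (Finset ι)).filter (fun B => B.card = k)).fold max 0 ν)
    (hMpos : 0 < M)
    (hμa : ∀ A : Finset ι, A.card ≤ k → μ A = K * ν A / M)
    (hμb : ∀ A : Finset ι, k + 1 ≤ A.card → A.card < Fintype.card ι →
      μ A = K + ((A.card : ℝ) - k - 1) / ((Fintype.card ι : ℝ) - k - 1) * (1 - K))
    (hμc : μ Finset.univ = 1) :
    (∀ A B : Finset ι, A ⊆ B → μ A ≤ μ B) ∧
    μ ∅ = 0 ∧ μ Finset.univ = 1 ∧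
    (∀ A : Finset ι, 0 ≤ μ A ∧ μ A ≤ 1) :=
  k_interactive_construction_general ν μ k K hk2 hK0 hK1 hν0 hνrange hνmono M hM hMpos hμa hμb hμc
end

section
/- Let ν be a fuzzy measure on N and 1 ≤ k < n with M = max_{|B|=k} ν(B) > 0. Define μ(A) = ν(A)/M for |A| ≤ k and, recursively on cardinality, μ(A) = max_{B ⊂ A, |B| = |A|−1} μ(B) for |A| ≥ k+1. Then μ is a fuzzy measure and satisfies the k-maxitivity property μ(A) = max_{B ⊂ A, |B| = k} μ(B) for all A with |A| ≥ k+1. -/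
/-!
Once `μ A` is the maximum of `μ` over the `k`-subsets of `A` for every `A` with `|A| ≥ k`, everything
follows. This holds by induction on `|A|`: the maximum over the `(|A|-1)`-subsets of the maxima over their
`k`-subsets is the maximum over all `k`-subsets of `A`, since every `k`-subset of `A` extends to an
`(|A|-1)`-subset. Monotonicity then comes from that of `ν` below size `k` and of the maxima above it, and
`μ univ = M / M = 1` because the `k`-subsets of `univ` are exactly those over which `M` is taken.
-/

open Finset

namespace Finset

variable {ι : Type*}

def maxOverCardSubsets (k : ℕ) (f : Finset ι → ℝ) (A : Finset ι) : ℝ :=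
  (A.powerset.filter (fun B => B.card = k)).fold max 0 f

variable {k : ℕ} {f g : Finset ι → ℝ} {A B C : Finset ι}

theorem maxOverCardSubsets_nonneg : 0 ≤ maxOverCardSubsets k f A :=
  (le_fold_max _).mpr (Or.inl le_rfl)

theorem le_maxOverCardSubsets (hCA : C ⊆ A) (hC : C.card = k) :
    f C ≤ maxOverCardSubsets k f A :=
  (le_fold_max _).mpr (Or.inr ⟨C, mem_filter.mpr ⟨mem_powerset.mpr hCA, hC⟩, le_rfl⟩)

theorem maxOverCardSubsets_le {c : ℝ} (hc : 0 ≤ c) (hf : ∀ C ⊆ A, C.card = k → f C ≤ c) :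
    maxOverCardSubsets k f A ≤ c :=
  (fold_max_le _).mpr ⟨hc, fun C hC => by
    rw [mem_filter, mem_powerset] at hC
    exact hf C hC.1 hC.2⟩

theorem maxOverCardSubsets_congr (h : ∀ C ⊆ A, C.card = k → f C = g C) :
    maxOverCardSubsets k f A = maxOverCardSubsets k g A :=
  fold_congr fun C hC => by
    rw [mem_filter, mem_powerset] at hC
    exact h C hC.1 hC.2

theorem maxOverCardSubsets_mono (hAB : A ⊆ B) :
    maxOverCardSubsets k f A ≤ maxOverCardSubsets k f B :=
  maxOverCardSubsets_le maxOverCardSubsets_nonneg fun _ hCA hC =>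
    le_maxOverCardSubsets (hCA.trans hAB) hC

theorem maxOverCardSubsets_of_card_eq (hA : A.card = k) (hf : 0 ≤ f A) :
    maxOverCardSubsets k f A = f A :=
  le_antisymm
    (maxOverCardSubsets_le hf fun _ hCA hC => by
      rw [eq_of_subset_of_card_le hCA (hA.trans hC.symm).le])
    (le_maxOverCardSubsets subset_rfl hA)

theorem maxOverCardSubsets_div {c : ℝ} (hc : 0 ≤ c) :
    maxOverCardSubsets k (fun C => f C / c) A = maxOverCardSubsets k f A / c := by
  have := fold_hom (s := A.powerset.filter (fun B => B.card = k)) (b := 0) (f := f)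
    (op := max) (op' := max) (m := (· / c)) fun x y => (max_div_div_right hc x y).symm
  simpa only [zero_div, maxOverCardSubsets] using this

theorem maxOverCardSubsets_maxOverCardSubsets {j : ℕ} (hkj : k ≤ j) (hjA : j ≤ A.card) :
    maxOverCardSubsets j (maxOverCardSubsets k f) A = maxOverCardSubsets k f A := by
  refine le_antisymm
    (maxOverCardSubsets_le maxOverCardSubsets_nonneg fun B hBA _ => maxOverCardSubsets_mono hBA)
    (maxOverCardSubsets_le maxOverCardSubsets_nonneg fun C hCA hC => ?_)
  obtain ⟨B, hCB, hBA, hB⟩ := exists_subsuperset_card_eq hCA (hC.trans_le hkj) hjA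
  exact (le_maxOverCardSubsets hCB hC).trans (le_maxOverCardSubsets hBA hB)

theorem eq_maxOverCardSubsets_of_recursion
    (hf0 : ∀ A : Finset ι, A.card = k → 0 ≤ f A)
    (hrec : ∀ A : Finset ι, k + 1 ≤ A.card →
      f A = (A.powerset.filter (fun B => B.card + 1 = A.card)).fold max 0 f)
    (hA : k ≤ A.card) : f A = maxOverCardSubsets k f A := by
  generalize hn : A.card = n at hA
  induction n, hA using Nat.le_induction generalizing A with
  | base => exact (maxOverCardSubsets_of_card_eq hn (hf0 A hn)).symm
  | succ m hkm ih =>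
    have hsucc : f A = maxOverCardSubsets m f A := by
      rw [hrec A (by omega), maxOverCardSubsets]
      congr 1
      exact filter_congr fun B _ => by omega
    rw [hsucc, maxOverCardSubsets_congr fun B _ hB => ih hB,
      maxOverCardSubsets_maxOverCardSubsets hkm (by omega)]

theorem monotone_of_eq_maxOverCardSubsets
    (hsmall : ∀ A B : Finset ι, A ⊆ B → B.card ≤ k → f A ≤ f B)
    (hlarge : ∀ A : Finset ι, k ≤ A.card → f A = maxOverCardSubsets k f A) : Monotone f := by
  intro A B hAB
  rcases le_total B.card k with hB | hB
  · exact hsmall A B hAB hB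
  rw [hlarge B hB]
  rcases le_total A.card k with hA | hA
  · obtain ⟨C, hAC, hCB, hC⟩ := exists_subsuperset_card_eq hAB hA hB
    exact (hsmall A C hAC hC.le).trans (le_maxOverCardSubsets hCB hC)
  · exact (hlarge A hA).trans_le (maxOverCardSubsets_mono hAB)

end Finset

theorem k_maxitive_construction_general
    {ι : Type*} [Fintype ι]
    (ν μ : Finset ι → ℝ) (k : ℕ)
    (hk2 : k < Fintype.card ι)
    (hν0 : ν ∅ = 0)
    (hνmono : ∀ A B : Finset ι, A ⊆ B → ν A ≤ ν B)
    (M : ℝ)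
    (hM : M = ((Finset.univ : Finset (Finset ι)).filter (fun B => B.card = k)).fold max 0 ν)
    (hMpos : 0 < M)
    (hμa : ∀ A : Finset ι, A.card ≤ k → μ A = ν A / M)
    (hμb : ∀ A : Finset ι, k + 1 ≤ A.card →
      μ A = (A.powerset.filter (fun B => B.card + 1 = A.card)).fold max 0 μ) :
    (∀ A B : Finset ι, A ⊆ B → μ A ≤ μ B) ∧
    μ ∅ = 0 ∧ μ Finset.univ = 1 ∧
    (∀ A : Finset ι, 0 ≤ μ A ∧ μ A ≤ 1) ∧
    (∀ A : Finset ι, k + 1 ≤ A.card →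
      μ A = (A.powerset.filter (fun B => B.card = k)).fold max 0 μ) := by
  have hsmall : ∀ A B : Finset ι, A ⊆ B → B.card ≤ k → μ A ≤ μ B := fun A B hAB hB => by
    rw [hμa A ((card_le_card hAB).trans hB), hμa B hB]
    exact div_le_div_of_nonneg_right (hνmono A B hAB) hMpos.le
  have hempty : μ ∅ = 0 := by rw [hμa ∅ (by simp), hν0, zero_div]
  have hlarge : ∀ A : Finset ι, k ≤ A.card → μ A = maxOverCardSubsets k μ A :=
    fun A => eq_maxOverCardSubsets_of_recursion
      (fun A hA => hempty ▸ hsmall ∅ A (empty_subset A) hA.le) hμb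
  have hmono : Monotone μ := monotone_of_eq_maxOverCardSubsets hsmall hlarge
  have huniv : μ univ = 1 := by
    have hM' : maxOverCardSubsets k ν univ = M := by rw [hM, maxOverCardSubsets, powerset_univ]
    rw [hlarge univ (by rw [card_univ]; exact hk2.le),
      maxOverCardSubsets_congr fun C _ hC => hμa C hC.le, maxOverCardSubsets_div hMpos.le, hM',
      div_self hMpos.ne']
  refine ⟨fun A B hAB => hmono hAB, hempty, huniv, fun A => ⟨?_, ?_⟩,
    fun A hA => hlarge A (by omega)⟩
  · exact hempty ▸ hmono (empty_subset A)
  · exact huniv ▸ hmono (subset_univ A)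

/-- The k-maxitive construction: μ(A) = ν(A)/M for |A| ≤ k, and recursively
μ(A) = max_{B⊂A, |B|=|A|−1} μ(B) for |A| ≥ k+1, yields a k-maxitive fuzzy measure. -/
theorem k_maxitive_construction
    {ι : Type*} [Fintype ι] [DecidableEq ι]
    (ν μ : Finset ι → ℝ) (k : ℕ)
    (hk1 : 1 ≤ k) (hk2 : k < Fintype.card ι)
    (hν0 : ν ∅ = 0) (hν1 : ν Finset.univ = 1)
    (hνrange : ∀ A : Finset ι, 0 ≤ ν A ∧ ν A ≤ 1)
    (hνmono : ∀ A B : Finset ι, A ⊆ B → ν A ≤ ν B)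
    (M : ℝ)
    (hM : M = ((Finset.univ : Finset (Finset ι)).filter (fun B => B.card = k)).fold max 0 ν)
    (hMpos : 0 < M)
    (hμa : ∀ A : Finset ι, A.card ≤ k → μ A = ν A / M)
    (hμb : ∀ A : Finset ι, k + 1 ≤ A.card →
      μ A = (A.powerset.filter (fun B => B.card + 1 = A.card)).fold max 0 μ) :
    (∀ A B : Finset ι, A ⊆ B → μ A ≤ μ B) ∧
    μ ∅ = 0 ∧ μ Finset.univ = 1 ∧
    (∀ A : Finset ι, 0 ≤ μ A ∧ μ A ≤ 1) ∧
    (∀ A : Finset ι, k + 1 ≤ A.card →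
      μ A = (A.powerset.filter (fun B => B.card = k)).fold max 0 μ) :=
  k_maxitive_construction_general ν μ k hk2 hν0 hνmono M hM hMpos hμa hμb
end
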